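/- Let ℏ, m > 0 and define the operator Q₁ on smooth functions φ : ℝ × ℝ³ → ℂ by (Q₁φ)(t,x) = 2t² ∂_t φ(t,x) + t (x·∇φ)(t,x), where x·∇ = x₁∂₁ + x₂∂₂ + x₃∂₃. Then for every smooth φ, the second-order commutator with the free Schrödinger operator satisfies [L_s,[L_s, Q₁]]φ = 4iℏ L_s φ. -/

import Mathlib

open Complex ContDiff

/-- Partial derivative in the `i`-th coordinate direction on `ℝ⁴`. -/
noncomputable def pd (i : Fin 4) (f : (Fin 4 → ℝ) → ℂ) : (Fin 4 → ℝ) → ℂ :=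
  fun x => fderiv ℝ f x (Pi.single i 1)

/-- The free Schrödinger operator `L_s φ = iℏ ∂_t φ + (ℏ²/(2m)) Δφ`,
with time variable `x 0` and space variables `x 1, x 2, x 3`. -/
noncomputable def Ls (hbar m : ℝ) (f : (Fin 4 → ℝ) → ℂ) : (Fin 4 → ℝ) → ℂ :=
  fun x => Complex.I * (hbar : ℂ) * pd 0 f x +
    ((hbar ^ 2 / (2 * m) : ℝ) : ℂ) *
      (pd 1 (pd 1 f) x + pd 2 (pd 2 f) x + pd 3 (pd 3 f) x)

/-- The operator `Q₁ φ = 2t² ∂_t φ + t (x·∇φ)`. -/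
noncomputable def Q1 (f : (Fin 4 → ℝ) → ℂ) : (Fin 4 → ℝ) → ℂ :=
  fun x => 2 * ((x 0) ^ 2 : ℝ) * pd 0 f x +
    (x 0 : ℂ) * (∑ k : Fin 3, (x k.succ : ℂ) * pd k.succ f x)

@[fun_prop]
lemma ofReal_differentiable' : Differentiable ℝ (fun r : ℝ => (r : ℂ)) :=
  Complex.ofRealCLM.differentiable

@[fun_prop]
lemma ofReal_contDiff' : ContDiff ℝ ∞ (fun r : ℝ => (r : ℂ)) :=
  Complex.ofRealCLM.contDiff

@[fun_prop]
lemma pd_contDiff (i : Fin 4) (f : (Fin 4 → ℝ) → ℂ) (hf : ContDiff ℝ ∞ f) :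
    ContDiff ℝ ∞ (pd i f) := by
  unfold pd
  exact (contDiff_infty_iff_fderiv.mp hf).2.clm_apply contDiff_const

@[fun_prop]
lemma pd_differentiable (i : Fin 4) (f : (Fin 4 → ℝ) → ℂ) (hf : ContDiff ℝ ∞ f) :
    Differentiable ℝ (pd i f) :=
  (pd_contDiff i f hf).differentiable (by decide)

lemma pd_addF (i : Fin 4) {f g : (Fin 4 → ℝ) → ℂ}
    (hf : Differentiable ℝ f) (hg : Differentiable ℝ g) :
    pd i (fun y => f y + g y) = fun x => pd i f x + pd i g x := by
  funext x
  unfold pd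
  rw [fderiv_fun_add (hf x) (hg x)]
  simp

lemma pd_mulF (i : Fin 4) {f g : (Fin 4 → ℝ) → ℂ}
    (hf : Differentiable ℝ f) (hg : Differentiable ℝ g) :
    pd i (fun y => f y * g y) = fun x => f x * pd i g x + g x * pd i f x := by
  funext x
  unfold pd
  rw [fderiv_fun_mul (hf x) (hg x)]
  simp

lemma pd_constF (i : Fin 4) (c : ℂ) : pd i (fun _ => c) = fun _ => 0 := by
  funext x; unfold pd; simp

lemma pd_coordF (i j : Fin 4) :
    pd i (fun y => ((y j : ℝ) : ℂ)) = fun _ => if j = i then 1 else 0 := by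
  funext x
  have h : (fun y : Fin 4 → ℝ => ((y j : ℝ) : ℂ))
      = Complex.ofRealCLM.comp (ContinuousLinearMap.proj j) := rfl
  unfold pd
  rw [h, ContinuousLinearMap.fderiv]
  simp [Pi.single_apply, apply_ite (fun r : ℝ => (r : ℂ))]

lemma pd_comm (i j : Fin 4) (f : (Fin 4 → ℝ) → ℂ) (hf : ContDiff ℝ ∞ f) :
    pd i (pd j f) = pd j (pd i f) := by
  funext x
  have hsymm : IsSymmSndFDerivAt ℝ f x :=
    (hf.contDiffAt).isSymmSndFDerivAt (by simp [minSmoothness_of_isRCLikeNormedField]; exact WithTop.coe_le_coe.mpr (le_top : (2 : ℕ∞) ≤ ⊤))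
  have hd : DifferentiableAt ℝ (fderiv ℝ f) x :=
    ((contDiff_infty_iff_fderiv.mp hf).2.differentiable (by decide)).differentiableAt
  have key : ∀ u v : Fin 4 → ℝ,
      fderiv ℝ (fun y => fderiv ℝ f y u) x v = fderiv ℝ (fderiv ℝ f) x v u := by
    intro u v
    rw [fderiv_clm_apply hd (differentiableAt_const u)]
    simp
  show fderiv ℝ (fun y => fderiv ℝ f y (Pi.single j 1)) x (Pi.single i 1) =
      fderiv ℝ (fun y => fderiv ℝ f y (Pi.single i 1)) x (Pi.single j 1)
  rw [key, key]
  exact hsymm _ _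

lemma Ls_eq (hbar m : ℝ) (f : (Fin 4 → ℝ) → ℂ) :
    Ls hbar m f = fun x => Complex.I * (hbar : ℂ) * pd 0 f x +
      ((hbar ^ 2 / (2 * m) : ℝ) : ℂ) *
        (pd 1 (pd 1 f) x + pd 2 (pd 2 f) x + pd 3 (pd 3 f) x) := rfl

lemma Q1_eq (f : (Fin 4 → ℝ) → ℂ) :
    Q1 f = fun x => 2 * (((x 0 : ℝ) : ℂ) * (((x 0 : ℝ) : ℂ) * pd 0 f x)) +
      ((x 0 : ℝ) : ℂ) * (((x 1 : ℝ) : ℂ) * pd 1 f x + ((x 2 : ℝ) : ℂ) * pd 2 f x +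
        ((x 3 : ℝ) : ℂ) * pd 3 f x) := by
  funext x
  have h0 : ((0 : Fin 3).succ : Fin 4) = 1 := rfl
  have h1 : ((1 : Fin 3).succ : Fin 4) = 2 := rfl
  have h2 : ((2 : Fin 3).succ : Fin 4) = 3 := rfl
  simp only [Q1, Fin.sum_univ_three, h0, h1, h2]
  push_cast
  ring

/-- The first commutator `[L_s, Q₁] = 4 i ℏ t ∂_t + i ℏ x·∇ + (ℏ²/m) t Δ`. -/
noncomputable def Cc (hbar m : ℝ) (f : (Fin 4 → ℝ) → ℂ) : (Fin 4 → ℝ) → ℂ :=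
  fun x => 4 * (Complex.I * (hbar : ℂ)) * (((x 0 : ℝ) : ℂ) * pd 0 f x) +
    Complex.I * (hbar : ℂ) * (((x 1 : ℝ) : ℂ) * pd 1 f x + ((x 2 : ℝ) : ℂ) * pd 2 f x +
      ((x 3 : ℝ) : ℂ) * pd 3 f x) +
    2 * ((hbar ^ 2 / (2 * m) : ℝ) : ℂ) * (((x 0 : ℝ) : ℂ) *
      (pd 1 (pd 1 f) x + pd 2 (pd 2 f) x + pd 3 (pd 3 f) x))

@[fun_prop]
lemma Ls_contDiff (hbar m : ℝ) (f : (Fin 4 → ℝ) → ℂ) (hf : ContDiff ℝ ∞ f) :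
    ContDiff ℝ ∞ (Ls hbar m f) := by
  unfold Ls; fun_prop

@[fun_prop]
lemma Q1_contDiff (f : (Fin 4 → ℝ) → ℂ) (hf : ContDiff ℝ ∞ f) :
    ContDiff ℝ ∞ (Q1 f) := by
  rw [Q1_eq]; fun_prop

@[fun_prop]
lemma Cc_contDiff (hbar m : ℝ) (f : (Fin 4 → ℝ) → ℂ) (hf : ContDiff ℝ ∞ f) :
    ContDiff ℝ ∞ (Cc hbar m f) := by
  unfold Cc; fun_prop

lemma comm1 (hbar m : ℝ) (ψ : (Fin 4 → ℝ) → ℂ) (hψ : ContDiff ℝ ∞ ψ) (x : Fin 4 → ℝ) :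
    Ls hbar m (Q1 ψ) x - Q1 (Ls hbar m ψ) x = Cc hbar m ψ x := by
  simp only [Q1_eq, Ls_eq, Cc]
  simp (disch := fun_prop) only [pd_addF, pd_mulF, pd_constF, pd_coordF,
    Fin.reduceEq, reduceIte, mul_zero, zero_mul, add_zero, zero_add, mul_one, one_mul]
  simp only [pd_comm 1 0 ψ hψ,
    pd_comm 2 0 ψ hψ,
    pd_comm 3 0 ψ hψ,
    pd_comm 2 1 ψ hψ,
    pd_comm 3 1 ψ hψ,
    pd_comm 3 2 ψ hψ,
    pd_comm 1 0 (pd 0 ψ) (by fun_prop),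
    pd_comm 1 0 (pd 1 ψ) (by fun_prop),
    pd_comm 1 0 (pd 2 ψ) (by fun_prop),
    pd_comm 1 0 (pd 3 ψ) (by fun_prop),
    pd_comm 2 0 (pd 0 ψ) (by fun_prop),
    pd_comm 2 0 (pd 1 ψ) (by fun_prop),
    pd_comm 2 0 (pd 2 ψ) (by fun_prop),
    pd_comm 2 0 (pd 3 ψ) (by fun_prop),
    pd_comm 3 0 (pd 0 ψ) (by fun_prop),
    pd_comm 3 0 (pd 1 ψ) (by fun_prop),
    pd_comm 3 0 (pd 2 ψ) (by fun_prop),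
    pd_comm 3 0 (pd 3 ψ) (by fun_prop),
    pd_comm 2 1 (pd 0 ψ) (by fun_prop),
    pd_comm 2 1 (pd 1 ψ) (by fun_prop),
    pd_comm 2 1 (pd 2 ψ) (by fun_prop),
    pd_comm 2 1 (pd 3 ψ) (by fun_prop),
    pd_comm 3 1 (pd 0 ψ) (by fun_prop),
    pd_comm 3 1 (pd 1 ψ) (by fun_prop),
    pd_comm 3 1 (pd 2 ψ) (by fun_prop),
    pd_comm 3 1 (pd 3 ψ) (by fun_prop),
    pd_comm 3 2 (pd 0 ψ) (by fun_prop),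
    pd_comm 3 2 (pd 1 ψ) (by fun_prop),
    pd_comm 3 2 (pd 2 ψ) (by fun_prop),
    pd_comm 3 2 (pd 3 ψ) (by fun_prop),
    pd_comm 1 0 (pd 0 (pd 0 ψ)) (by fun_prop),
    pd_comm 1 0 (pd 0 (pd 1 ψ)) (by fun_prop),
    pd_comm 1 0 (pd 0 (pd 2 ψ)) (by fun_prop),
    pd_comm 1 0 (pd 0 (pd 3 ψ)) (by fun_prop),
    pd_comm 1 0 (pd 1 (pd 0 ψ)) (by fun_prop),
    pd_comm 1 0 (pd 1 (pd 1 ψ)) (by fun_prop),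
    pd_comm 1 0 (pd 1 (pd 2 ψ)) (by fun_prop),
    pd_comm 1 0 (pd 1 (pd 3 ψ)) (by fun_prop),
    pd_comm 1 0 (pd 2 (pd 0 ψ)) (by fun_prop),
    pd_comm 1 0 (pd 2 (pd 1 ψ)) (by fun_prop),
    pd_comm 1 0 (pd 2 (pd 2 ψ)) (by fun_prop),
    pd_comm 1 0 (pd 2 (pd 3 ψ)) (by fun_prop),
    pd_comm 1 0 (pd 3 (pd 0 ψ)) (by fun_prop),
    pd_comm 1 0 (pd 3 (pd 1 ψ)) (by fun_prop),
    pd_comm 1 0 (pd 3 (pd 2 ψ)) (by fun_prop),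
    pd_comm 1 0 (pd 3 (pd 3 ψ)) (by fun_prop),
    pd_comm 2 0 (pd 0 (pd 0 ψ)) (by fun_prop),
    pd_comm 2 0 (pd 0 (pd 1 ψ)) (by fun_prop),
    pd_comm 2 0 (pd 0 (pd 2 ψ)) (by fun_prop),
    pd_comm 2 0 (pd 0 (pd 3 ψ)) (by fun_prop),
    pd_comm 2 0 (pd 1 (pd 0 ψ)) (by fun_prop),
    pd_comm 2 0 (pd 1 (pd 1 ψ)) (by fun_prop),
    pd_comm 2 0 (pd 1 (pd 2 ψ)) (by fun_prop),
    pd_comm 2 0 (pd 1 (pd 3 ψ)) (by fun_prop),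
    pd_comm 2 0 (pd 2 (pd 0 ψ)) (by fun_prop),
    pd_comm 2 0 (pd 2 (pd 1 ψ)) (by fun_prop),
    pd_comm 2 0 (pd 2 (pd 2 ψ)) (by fun_prop),
    pd_comm 2 0 (pd 2 (pd 3 ψ)) (by fun_prop),
    pd_comm 2 0 (pd 3 (pd 0 ψ)) (by fun_prop),
    pd_comm 2 0 (pd 3 (pd 1 ψ)) (by fun_prop),
    pd_comm 2 0 (pd 3 (pd 2 ψ)) (by fun_prop),
    pd_comm 2 0 (pd 3 (pd 3 ψ)) (by fun_prop),
    pd_comm 3 0 (pd 0 (pd 0 ψ)) (by fun_prop),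
    pd_comm 3 0 (pd 0 (pd 1 ψ)) (by fun_prop),
    pd_comm 3 0 (pd 0 (pd 2 ψ)) (by fun_prop),
    pd_comm 3 0 (pd 0 (pd 3 ψ)) (by fun_prop),
    pd_comm 3 0 (pd 1 (pd 0 ψ)) (by fun_prop),
    pd_comm 3 0 (pd 1 (pd 1 ψ)) (by fun_prop),
    pd_comm 3 0 (pd 1 (pd 2 ψ)) (by fun_prop),
    pd_comm 3 0 (pd 1 (pd 3 ψ)) (by fun_prop),
    pd_comm 3 0 (pd 2 (pd 0 ψ)) (by fun_prop),
    pd_comm 3 0 (pd 2 (pd 1 ψ)) (by fun_prop),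
    pd_comm 3 0 (pd 2 (pd 2 ψ)) (by fun_prop),
    pd_comm 3 0 (pd 2 (pd 3 ψ)) (by fun_prop),
    pd_comm 3 0 (pd 3 (pd 0 ψ)) (by fun_prop),
    pd_comm 3 0 (pd 3 (pd 1 ψ)) (by fun_prop),
    pd_comm 3 0 (pd 3 (pd 2 ψ)) (by fun_prop),
    pd_comm 3 0 (pd 3 (pd 3 ψ)) (by fun_prop),
    pd_comm 2 1 (pd 0 (pd 0 ψ)) (by fun_prop),
    pd_comm 2 1 (pd 0 (pd 1 ψ)) (by fun_prop),
    pd_comm 2 1 (pd 0 (pd 2 ψ)) (by fun_prop),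
    pd_comm 2 1 (pd 0 (pd 3 ψ)) (by fun_prop),
    pd_comm 2 1 (pd 1 (pd 0 ψ)) (by fun_prop),
    pd_comm 2 1 (pd 1 (pd 1 ψ)) (by fun_prop),
    pd_comm 2 1 (pd 1 (pd 2 ψ)) (by fun_prop),
    pd_comm 2 1 (pd 1 (pd 3 ψ)) (by fun_prop),
    pd_comm 2 1 (pd 2 (pd 0 ψ)) (by fun_prop),
    pd_comm 2 1 (pd 2 (pd 1 ψ)) (by fun_prop),
    pd_comm 2 1 (pd 2 (pd 2 ψ)) (by fun_prop),
    pd_comm 2 1 (pd 2 (pd 3 ψ)) (by fun_prop),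
    pd_comm 2 1 (pd 3 (pd 0 ψ)) (by fun_prop),
    pd_comm 2 1 (pd 3 (pd 1 ψ)) (by fun_prop),
    pd_comm 2 1 (pd 3 (pd 2 ψ)) (by fun_prop),
    pd_comm 2 1 (pd 3 (pd 3 ψ)) (by fun_prop),
    pd_comm 3 1 (pd 0 (pd 0 ψ)) (by fun_prop),
    pd_comm 3 1 (pd 0 (pd 1 ψ)) (by fun_prop),
    pd_comm 3 1 (pd 0 (pd 2 ψ)) (by fun_prop),
    pd_comm 3 1 (pd 0 (pd 3 ψ)) (by fun_prop),
    pd_comm 3 1 (pd 1 (pd 0 ψ)) (by fun_prop),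
    pd_comm 3 1 (pd 1 (pd 1 ψ)) (by fun_prop),
    pd_comm 3 1 (pd 1 (pd 2 ψ)) (by fun_prop),
    pd_comm 3 1 (pd 1 (pd 3 ψ)) (by fun_prop),
    pd_comm 3 1 (pd 2 (pd 0 ψ)) (by fun_prop),
    pd_comm 3 1 (pd 2 (pd 1 ψ)) (by fun_prop),
    pd_comm 3 1 (pd 2 (pd 2 ψ)) (by fun_prop),
    pd_comm 3 1 (pd 2 (pd 3 ψ)) (by fun_prop),
    pd_comm 3 1 (pd 3 (pd 0 ψ)) (by fun_prop),
    pd_comm 3 1 (pd 3 (pd 1 ψ)) (by fun_prop),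
    pd_comm 3 1 (pd 3 (pd 2 ψ)) (by fun_prop),
    pd_comm 3 1 (pd 3 (pd 3 ψ)) (by fun_prop),
    pd_comm 3 2 (pd 0 (pd 0 ψ)) (by fun_prop),
    pd_comm 3 2 (pd 0 (pd 1 ψ)) (by fun_prop),
    pd_comm 3 2 (pd 0 (pd 2 ψ)) (by fun_prop),
    pd_comm 3 2 (pd 0 (pd 3 ψ)) (by fun_prop),
    pd_comm 3 2 (pd 1 (pd 0 ψ)) (by fun_prop),
    pd_comm 3 2 (pd 1 (pd 1 ψ)) (by fun_prop),
    pd_comm 3 2 (pd 1 (pd 2 ψ)) (by fun_prop),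
    pd_comm 3 2 (pd 1 (pd 3 ψ)) (by fun_prop),
    pd_comm 3 2 (pd 2 (pd 0 ψ)) (by fun_prop),
    pd_comm 3 2 (pd 2 (pd 1 ψ)) (by fun_prop),
    pd_comm 3 2 (pd 2 (pd 2 ψ)) (by fun_prop),
    pd_comm 3 2 (pd 2 (pd 3 ψ)) (by fun_prop),
    pd_comm 3 2 (pd 3 (pd 0 ψ)) (by fun_prop),
    pd_comm 3 2 (pd 3 (pd 1 ψ)) (by fun_prop),
    pd_comm 3 2 (pd 3 (pd 2 ψ)) (by fun_prop),
    pd_comm 3 2 (pd 3 (pd 3 ψ)) (by fun_prop)]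
  ring


lemma Cc_eq (hbar m : ℝ) (f : (Fin 4 → ℝ) → ℂ) :
    Cc hbar m f = fun x => 4 * (Complex.I * (hbar : ℂ)) * (((x 0 : ℝ) : ℂ) * pd 0 f x) +
      Complex.I * (hbar : ℂ) * (((x 1 : ℝ) : ℂ) * pd 1 f x + ((x 2 : ℝ) : ℂ) * pd 2 f x +
        ((x 3 : ℝ) : ℂ) * pd 3 f x) +
      2 * ((hbar ^ 2 / (2 * m) : ℝ) : ℂ) * (((x 0 : ℝ) : ℂ) *
        (pd 1 (pd 1 f) x + pd 2 (pd 2 f) x + pd 3 (pd 3 f) x)) := rfl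

lemma comm2 (hbar m : ℝ) (ψ : (Fin 4 → ℝ) → ℂ) (hψ : ContDiff ℝ ∞ ψ) (x : Fin 4 → ℝ) :
    Ls hbar m (Cc hbar m ψ) x - Cc hbar m (Ls hbar m ψ) x
      = 4 * Complex.I * (hbar : ℂ) * Ls hbar m ψ x := by
  simp only [Ls_eq, Cc_eq]
  simp (disch := fun_prop) only [pd_addF, pd_mulF, pd_constF, pd_coordF,
    Fin.reduceEq, reduceIte, mul_zero, zero_mul, add_zero, zero_add, mul_one, one_mul]
  simp only [pd_comm 1 0 ψ hψ,
    pd_comm 2 0 ψ hψ,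
    pd_comm 3 0 ψ hψ,
    pd_comm 2 1 ψ hψ,
    pd_comm 3 1 ψ hψ,
    pd_comm 3 2 ψ hψ,
    pd_comm 1 0 (pd 0 ψ) (by fun_prop),
    pd_comm 1 0 (pd 1 ψ) (by fun_prop),
    pd_comm 1 0 (pd 2 ψ) (by fun_prop),
    pd_comm 1 0 (pd 3 ψ) (by fun_prop),
    pd_comm 2 0 (pd 0 ψ) (by fun_prop),
    pd_comm 2 0 (pd 1 ψ) (by fun_prop),
    pd_comm 2 0 (pd 2 ψ) (by fun_prop),
    pd_comm 2 0 (pd 3 ψ) (by fun_prop),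
    pd_comm 3 0 (pd 0 ψ) (by fun_prop),
    pd_comm 3 0 (pd 1 ψ) (by fun_prop),
    pd_comm 3 0 (pd 2 ψ) (by fun_prop),
    pd_comm 3 0 (pd 3 ψ) (by fun_prop),
    pd_comm 2 1 (pd 0 ψ) (by fun_prop),
    pd_comm 2 1 (pd 1 ψ) (by fun_prop),
    pd_comm 2 1 (pd 2 ψ) (by fun_prop),
    pd_comm 2 1 (pd 3 ψ) (by fun_prop),
    pd_comm 3 1 (pd 0 ψ) (by fun_prop),
    pd_comm 3 1 (pd 1 ψ) (by fun_prop),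
    pd_comm 3 1 (pd 2 ψ) (by fun_prop),
    pd_comm 3 1 (pd 3 ψ) (by fun_prop),
    pd_comm 3 2 (pd 0 ψ) (by fun_prop),
    pd_comm 3 2 (pd 1 ψ) (by fun_prop),
    pd_comm 3 2 (pd 2 ψ) (by fun_prop),
    pd_comm 3 2 (pd 3 ψ) (by fun_prop),
    pd_comm 1 0 (pd 0 (pd 0 ψ)) (by fun_prop),
    pd_comm 1 0 (pd 0 (pd 1 ψ)) (by fun_prop),
    pd_comm 1 0 (pd 0 (pd 2 ψ)) (by fun_prop),
    pd_comm 1 0 (pd 0 (pd 3 ψ)) (by fun_prop),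
    pd_comm 1 0 (pd 1 (pd 0 ψ)) (by fun_prop),
    pd_comm 1 0 (pd 1 (pd 1 ψ)) (by fun_prop),
    pd_comm 1 0 (pd 1 (pd 2 ψ)) (by fun_prop),
    pd_comm 1 0 (pd 1 (pd 3 ψ)) (by fun_prop),
    pd_comm 1 0 (pd 2 (pd 0 ψ)) (by fun_prop),
    pd_comm 1 0 (pd 2 (pd 1 ψ)) (by fun_prop),
    pd_comm 1 0 (pd 2 (pd 2 ψ)) (by fun_prop),
    pd_comm 1 0 (pd 2 (pd 3 ψ)) (by fun_prop),
    pd_comm 1 0 (pd 3 (pd 0 ψ)) (by fun_prop),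
    pd_comm 1 0 (pd 3 (pd 1 ψ)) (by fun_prop),
    pd_comm 1 0 (pd 3 (pd 2 ψ)) (by fun_prop),
    pd_comm 1 0 (pd 3 (pd 3 ψ)) (by fun_prop),
    pd_comm 2 0 (pd 0 (pd 0 ψ)) (by fun_prop),
    pd_comm 2 0 (pd 0 (pd 1 ψ)) (by fun_prop),
    pd_comm 2 0 (pd 0 (pd 2 ψ)) (by fun_prop),
    pd_comm 2 0 (pd 0 (pd 3 ψ)) (by fun_prop),
    pd_comm 2 0 (pd 1 (pd 0 ψ)) (by fun_prop),
    pd_comm 2 0 (pd 1 (pd 1 ψ)) (by fun_prop),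
    pd_comm 2 0 (pd 1 (pd 2 ψ)) (by fun_prop),
    pd_comm 2 0 (pd 1 (pd 3 ψ)) (by fun_prop),
    pd_comm 2 0 (pd 2 (pd 0 ψ)) (by fun_prop),
    pd_comm 2 0 (pd 2 (pd 1 ψ)) (by fun_prop),
    pd_comm 2 0 (pd 2 (pd 2 ψ)) (by fun_prop),
    pd_comm 2 0 (pd 2 (pd 3 ψ)) (by fun_prop),
    pd_comm 2 0 (pd 3 (pd 0 ψ)) (by fun_prop),
    pd_comm 2 0 (pd 3 (pd 1 ψ)) (by fun_prop),
    pd_comm 2 0 (pd 3 (pd 2 ψ)) (by fun_prop),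
    pd_comm 2 0 (pd 3 (pd 3 ψ)) (by fun_prop),
    pd_comm 3 0 (pd 0 (pd 0 ψ)) (by fun_prop),
    pd_comm 3 0 (pd 0 (pd 1 ψ)) (by fun_prop),
    pd_comm 3 0 (pd 0 (pd 2 ψ)) (by fun_prop),
    pd_comm 3 0 (pd 0 (pd 3 ψ)) (by fun_prop),
    pd_comm 3 0 (pd 1 (pd 0 ψ)) (by fun_prop),
    pd_comm 3 0 (pd 1 (pd 1 ψ)) (by fun_prop),
    pd_comm 3 0 (pd 1 (pd 2 ψ)) (by fun_prop),
    pd_comm 3 0 (pd 1 (pd 3 ψ)) (by fun_prop),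
    pd_comm 3 0 (pd 2 (pd 0 ψ)) (by fun_prop),
    pd_comm 3 0 (pd 2 (pd 1 ψ)) (by fun_prop),
    pd_comm 3 0 (pd 2 (pd 2 ψ)) (by fun_prop),
    pd_comm 3 0 (pd 2 (pd 3 ψ)) (by fun_prop),
    pd_comm 3 0 (pd 3 (pd 0 ψ)) (by fun_prop),
    pd_comm 3 0 (pd 3 (pd 1 ψ)) (by fun_prop),
    pd_comm 3 0 (pd 3 (pd 2 ψ)) (by fun_prop),
    pd_comm 3 0 (pd 3 (pd 3 ψ)) (by fun_prop),
    pd_comm 2 1 (pd 0 (pd 0 ψ)) (by fun_prop),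
    pd_comm 2 1 (pd 0 (pd 1 ψ)) (by fun_prop),
    pd_comm 2 1 (pd 0 (pd 2 ψ)) (by fun_prop),
    pd_comm 2 1 (pd 0 (pd 3 ψ)) (by fun_prop),
    pd_comm 2 1 (pd 1 (pd 0 ψ)) (by fun_prop),
    pd_comm 2 1 (pd 1 (pd 1 ψ)) (by fun_prop),
    pd_comm 2 1 (pd 1 (pd 2 ψ)) (by fun_prop),
    pd_comm 2 1 (pd 1 (pd 3 ψ)) (by fun_prop),
    pd_comm 2 1 (pd 2 (pd 0 ψ)) (by fun_prop),
    pd_comm 2 1 (pd 2 (pd 1 ψ)) (by fun_prop),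
    pd_comm 2 1 (pd 2 (pd 2 ψ)) (by fun_prop),
    pd_comm 2 1 (pd 2 (pd 3 ψ)) (by fun_prop),
    pd_comm 2 1 (pd 3 (pd 0 ψ)) (by fun_prop),
    pd_comm 2 1 (pd 3 (pd 1 ψ)) (by fun_prop),
    pd_comm 2 1 (pd 3 (pd 2 ψ)) (by fun_prop),
    pd_comm 2 1 (pd 3 (pd 3 ψ)) (by fun_prop),
    pd_comm 3 1 (pd 0 (pd 0 ψ)) (by fun_prop),
    pd_comm 3 1 (pd 0 (pd 1 ψ)) (by fun_prop),
    pd_comm 3 1 (pd 0 (pd 2 ψ)) (by fun_prop),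
    pd_comm 3 1 (pd 0 (pd 3 ψ)) (by fun_prop),
    pd_comm 3 1 (pd 1 (pd 0 ψ)) (by fun_prop),
    pd_comm 3 1 (pd 1 (pd 1 ψ)) (by fun_prop),
    pd_comm 3 1 (pd 1 (pd 2 ψ)) (by fun_prop),
    pd_comm 3 1 (pd 1 (pd 3 ψ)) (by fun_prop),
    pd_comm 3 1 (pd 2 (pd 0 ψ)) (by fun_prop),
    pd_comm 3 1 (pd 2 (pd 1 ψ)) (by fun_prop),
    pd_comm 3 1 (pd 2 (pd 2 ψ)) (by fun_prop),
    pd_comm 3 1 (pd 2 (pd 3 ψ)) (by fun_prop),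
    pd_comm 3 1 (pd 3 (pd 0 ψ)) (by fun_prop),
    pd_comm 3 1 (pd 3 (pd 1 ψ)) (by fun_prop),
    pd_comm 3 1 (pd 3 (pd 2 ψ)) (by fun_prop),
    pd_comm 3 1 (pd 3 (pd 3 ψ)) (by fun_prop),
    pd_comm 3 2 (pd 0 (pd 0 ψ)) (by fun_prop),
    pd_comm 3 2 (pd 0 (pd 1 ψ)) (by fun_prop),
    pd_comm 3 2 (pd 0 (pd 2 ψ)) (by fun_prop),
    pd_comm 3 2 (pd 0 (pd 3 ψ)) (by fun_prop),
    pd_comm 3 2 (pd 1 (pd 0 ψ)) (by fun_prop),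
    pd_comm 3 2 (pd 1 (pd 1 ψ)) (by fun_prop),
    pd_comm 3 2 (pd 1 (pd 2 ψ)) (by fun_prop),
    pd_comm 3 2 (pd 1 (pd 3 ψ)) (by fun_prop),
    pd_comm 3 2 (pd 2 (pd 0 ψ)) (by fun_prop),
    pd_comm 3 2 (pd 2 (pd 1 ψ)) (by fun_prop),
    pd_comm 3 2 (pd 2 (pd 2 ψ)) (by fun_prop),
    pd_comm 3 2 (pd 2 (pd 3 ψ)) (by fun_prop),
    pd_comm 3 2 (pd 3 (pd 0 ψ)) (by fun_prop),
    pd_comm 3 2 (pd 3 (pd 1 ψ)) (by fun_prop),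
    pd_comm 3 2 (pd 3 (pd 2 ψ)) (by fun_prop),
    pd_comm 3 2 (pd 3 (pd 3 ψ)) (by fun_prop)]
  ring

lemma Ls_add (hbar m : ℝ) {f g : (Fin 4 → ℝ) → ℂ}
    (hf : ContDiff ℝ ∞ f) (hg : ContDiff ℝ ∞ g) (x : Fin 4 → ℝ) :
    Ls hbar m (fun y => f y + g y) x = Ls hbar m f x + Ls hbar m g x := by
  have hf' : Differentiable ℝ f := hf.differentiable (by decide)
  have hg' : Differentiable ℝ g := hg.differentiable (by decide)
  simp (disch := first | assumption | fun_prop) only [Ls_eq, pd_addF]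
  ring

/-- the second-order commutator of the free Schrödinger operator
with `Q₁ = 2t²∂_t + t x·∇` satisfies `[L_s,[L_s,Q₁]]φ = 4iℏ L_s φ`. -/
theorem stmt_12 (hbar m : ℝ) (hhbar : 0 < hbar) (hm : 0 < m)
    (φ : (Fin 4 → ℝ) → ℂ) (hφ : ContDiff ℝ (⊤ : ℕ∞) φ) :
    ∀ x : Fin 4 → ℝ,
      Ls hbar m (Ls hbar m (Q1 φ)) x
        - 2 * Ls hbar m (Q1 (Ls hbar m φ)) x
        + Q1 (Ls hbar m (Ls hbar m φ)) x
      = 4 * Complex.I * (hbar : ℂ) * Ls hbar m φ x := by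
  intro x
  have hφ' : ContDiff ℝ ∞ φ := hφ.of_le (by simp)
  have hL : ContDiff ℝ ∞ (Ls hbar m φ) := by fun_prop
  have e1 : Ls hbar m (Q1 φ) = fun y => Cc hbar m φ y + Q1 (Ls hbar m φ) y := by
    funext y
    have h := comm1 hbar m φ hφ' y
    linear_combination h
  rw [e1, Ls_add hbar m (by fun_prop) (by fun_prop) x]
  have e2 := comm1 hbar m (Ls hbar m φ) hL x
  have e3 := comm2 hbar m φ hφ' x
  linear_combination e3 - e2
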